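/- In the symmetric group S_n (n ≥ 2) with the lexicographic order on transpositions — (i j) ≺ (i' j') for i<j, i'<j' iff i < i' or (i = i' and j < j') — every interval [x, y] in the noncrossing partition poset NC(S_n, (1 2 ... n)) contains a unique maximal chain with strictly ≺-increasing edge labels. -/

import Mathlib

open Equiv

noncomputable def wordLen {G : Type*} [Group G] (R : Set G) (g : G) : ℕ :=
  sInf {k | ∃ l : List G, (∀ x ∈ l, x ∈ R) ∧ l.length = k ∧ l.prod = g}

noncomputable def reflLen {n : ℕ} (σ : Perm (Fin n)) : ℕ :=
  wordLen {τ : Perm (Fin n) | τ.IsSwap} σ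

noncomputable def absLe {n : ℕ} (u v : Perm (Fin n)) : Prop :=
  reflLen u + reflLen (u⁻¹ * v) = reflLen v

noncomputable def absLt {n : ℕ} (u v : Perm (Fin n)) : Prop :=
  absLe u v ∧ u ≠ v

/-- Cover relation in the absolute order. -/
noncomputable def absCovers {n : ℕ} (u v : Perm (Fin n)) : Prop :=
  absLt u v ∧ ∀ z : Perm (Fin n), ¬ (absLt u z ∧ absLt z v)

/-- Lexicographic order on transpositions: `(i j) ≺ (i' j')` (for `i < j`, `i' < j'`) iff
`i < i'`, or `i = i'` and `j < j'`. -/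
def transLt {n : ℕ} (τ τ' : Perm (Fin n)) : Prop :=
  ∃ i j i' j' : Fin n, i < j ∧ i' < j' ∧ τ = Equiv.swap i j ∧ τ' = Equiv.swap i' j' ∧
    (i < i' ∨ (i = i' ∧ j < j'))

/-!
Translating by `x`, the maximal chains of `[x, y]` are the reduced factorisations of `w = x⁻¹ y`
into transpositions, read off as edge labels, and `w ≤ (1 2 … n)` forces every cycle of `w` to be
increasing. Reflection length is `n` minus the number of cycles (fixed points included), so
multiplying by `(a b)` shortens a permutation exactly when `a` and `b` lie in one of its cycles;
hence every letter of a reduced word of `w` joins two points of one cycle. In an increasing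
reduced word the first letter must therefore be `(m, w m)` with `m` the least point moved by `w`,
and `(m, w m) * w` again has increasing cycles, so induction on the length gives exactly one
increasing reduced word, that is, exactly one increasing maximal chain.
-/

open Equiv.Perm

section Relations

variable {α : Type*}

def mergeClasses (r : α → α → Prop) (a b : α) : α → α → Prop :=
  fun x y => r x y ∨ ((r x a ∨ r x b) ∧ (r y a ∨ r y b))

variable {r : α → α → Prop}

lemma mergeClasses_le (hr : Equivalence r) {a b : α} (hab : r a b) : mergeClasses r a b ≤ r := by
  have toA : ∀ {z}, r z a ∨ r z b → r z a := fun h => h.elim id (hr.trans · (hr.symm hab))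
  rintro x y (h | ⟨hx, hy⟩)
  exacts [h, hr.trans (toA hx) (hr.symm (toA hy))]

lemma equivalence_mergeClasses (hr : Equivalence r) (a b : α) :
    Equivalence (mergeClasses r a b) := by
  have closed : ∀ {x y}, r x y → (r y a ∨ r y b) → (r x a ∨ r x b) := fun hxy h =>
    h.imp (hr.trans hxy) (hr.trans hxy)
  refine ⟨fun x => Or.inl (hr.refl x), fun h => h.imp hr.symm And.symm, ?_⟩
  rintro x y z (hxy | ⟨hx, hy⟩) (hyz | ⟨hy', hz⟩)
  · exact Or.inl (hr.trans hxy hyz)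
  · exact Or.inr ⟨closed hxy hy', hz⟩
  · exact Or.inr ⟨hx, closed (hr.symm hyz) hy⟩
  · exact Or.inr ⟨hx, hz⟩

lemma Equiv.Perm.SameCycle.rel {f : Perm α} (hr : Equivalence r) (hf : ∀ x, r x (f x))
    {x y : α} (h : f.SameCycle x y) : r x y := by
  obtain ⟨i, rfl⟩ := h
  induction i using Int.induction_on with
  | zero => exact hr.refl x
  | succ i ih =>
    rw [add_comm, zpow_one_add, mul_apply]
    exact hr.trans ih (hf _)
  | pred i ih =>
    rw [sub_eq_neg_add, zpow_add, zpow_neg_one, mul_apply]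
    exact hr.trans ih (hr.symm (by simpa using hf (f⁻¹ ((f ^ (-(i : ℤ))) x))))

lemma Equiv.Perm.sameCycle_self_apply (f : Perm α) (x : α) : f.SameCycle x (f x) :=
  ⟨1, rfl⟩

section

variable [DecidableEq α]

lemma sameCycle_swap_mul_le (σ : Perm α) (a b : α) :
    (swap a b * σ).SameCycle ≤ mergeClasses σ.SameCycle a b := by
  refine fun _ _ h => h.rel (equivalence_mergeClasses (SameCycle.equivalence _) a b) fun x => ?_
  have hx := sameCycle_self_apply σ x
  rw [mul_apply, swap_apply_def]
  split_ifs with ha hb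
  · exact Or.inr ⟨Or.inl (ha ▸ hx), Or.inr (SameCycle.refl _ _)⟩
  · exact Or.inr ⟨Or.inr (hb ▸ hx), Or.inl (SameCycle.refl _ _)⟩
  · exact Or.inl hx

end

end Relations

section ClassCount

variable {α : Type*} [LinearOrder α] {r s : α → α → Prop}

def classMins (r : α → α → Prop) : Set α := {x | ∀ y, r x y → x ≤ y}

/-- For an equivalence relation `r`, the number of its classes, each class counted through its
least element. -/
noncomputable def classCount (r : α → α → Prop) : ℕ := (classMins r).ncard

lemma classMins_anti (h : r ≤ s) : classMins s ⊆ classMins r :=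
  fun _ hx y hxy => hx y (h _ _ hxy)

variable [Finite α]

lemma classCount_anti (h : r ≤ s) : classCount s ≤ classCount r :=
  Set.ncard_le_ncard (classMins_anti h)

lemma exists_rel_mem_classMins (hr : Equivalence r) (a : α) : ∃ m, r a m ∧ m ∈ classMins r := by
  obtain ⟨m, hm, hmin⟩ := Set.exists_min_image {y | r a y} id (Set.toFinite _) ⟨a, hr.refl a⟩
  exact ⟨m, hm, fun y hy => hmin y (hr.trans hm hy)⟩

lemma classCount_lt (hr : Equivalence r) (hs : Equivalence s) (hrs : r ≤ s) {x y : α}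
    (hxy : s x y) (hn : ¬ r x y) : classCount s < classCount r := by
  obtain ⟨mx, hxm, hmx⟩ := exists_rel_mem_classMins hr x
  obtain ⟨my, hym, hmy⟩ := exists_rel_mem_classMins hr y
  have hs_m : s mx my := hs.trans (hrs _ _ (hr.symm hxm)) (hs.trans hxy (hrs _ _ hym))
  have hne : mx ≠ my := fun h => hn (hr.trans hxm (h ▸ hr.symm hym))
  -- the larger of the two `r`-minima `mx`, `my` is not an `s`-minimum
  refine Set.ncard_lt_ncard ((Set.ssubset_iff_of_subset (classMins_anti hrs)).2 ?_)
  rcases hne.lt_or_gt with h | h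
  · exact ⟨my, hmy, fun hmem => not_lt.2 (hmem mx (hs.symm hs_m)) h⟩
  · exact ⟨mx, hmx, fun hmem => not_lt.2 (hmem my hs_m) h⟩

lemma classCount_le_classCount_mergeClasses_add_one (hr : Equivalence r) (a b : α) :
    classCount r ≤ classCount (mergeClasses r a b) + 1 := by
  obtain ⟨ma, ham, hma⟩ := exists_rel_mem_classMins hr a
  obtain ⟨mb, hbm, hmb⟩ := exists_rel_mem_classMins hr b
  -- merging can only cost the larger of the minima `ma`, `mb` its minimality
  suffices classMins r ⊆ insert (max ma mb) (classMins (mergeClasses r a b)) from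
    (Set.ncard_le_ncard this).trans (Set.ncard_insert_le _ _)
  have le_of_mem : ∀ {z}, r z a ∨ r z b → ma ≤ z ∨ mb ≤ z := fun h =>
    h.imp (fun h => hma _ (hr.trans (hr.symm ham) (hr.symm h)))
      (fun h => hmb _ (hr.trans (hr.symm hbm) (hr.symm h)))
  intro x hx
  by_cases hxmax : x = max ma mb
  · exact Or.inl hxmax
  refine Or.inr fun y => ?_
  rintro (h | ⟨hxU, hyU⟩)
  · exact hx y h
  have hxm : x = ma ∨ x = mb := hxU.imp
    (fun h => le_antisymm (hx _ (hr.trans h ham)) (hma _ (hr.symm (hr.trans h ham))))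
    (fun h => le_antisymm (hx _ (hr.trans h hbm)) (hmb _ (hr.symm (hr.trans h hbm))))
  have hx_le : x ≤ ma ∧ x ≤ mb := by
    rcases le_total ma mb with h | h
    · rw [max_eq_right h] at hxmax
      exact ⟨(hxm.resolve_right hxmax).le, (hxm.resolve_right hxmax).trans_le h⟩
    · rw [max_eq_left h] at hxmax
      exact ⟨(hxm.resolve_left hxmax).trans_le h, (hxm.resolve_left hxmax).le⟩
  rcases le_of_mem hyU with h | h
  exacts [hx_le.1.trans h, hx_le.2.trans h]

end ClassCount

section CycleCount

variable {α : Type*} [LinearOrder α]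

/-- Fixed points count as cycles. -/
noncomputable def cycleCount (σ : Perm α) : ℕ := classCount σ.SameCycle

lemma cycleCount_one : cycleCount (1 : Perm α) = Nat.card α := by
  have : classMins (SameCycle (1 : Perm α)) = Set.univ :=
    Set.eq_univ_of_forall fun x y h => (sameCycle_one.1 h).le
  rw [cycleCount, classCount, this, Set.ncard_univ]

variable [Finite α]

lemma cycleCount_le (σ : Perm α) : cycleCount σ ≤ Nat.card α :=
  Set.ncard_le_card _

lemma cycleCount_le_cycleCount_swap_mul_add_one (σ : Perm α) (a b : α) :
    cycleCount σ ≤ cycleCount (swap a b * σ) + 1 :=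
  (classCount_le_classCount_mergeClasses_add_one (SameCycle.equivalence _) a b).trans
    (Nat.add_le_add_right (classCount_anti (sameCycle_swap_mul_le σ a b)) 1)

lemma cycleCount_le_cycleCount_swap_mul {σ : Perm α} {a b : α} (h : σ.SameCycle a b) :
    cycleCount σ ≤ cycleCount (swap a b * σ) :=
  classCount_anti
    ((sameCycle_swap_mul_le σ a b).trans (mergeClasses_le (SameCycle.equivalence _) h))

lemma cycleCount_lt_cycleCount_swap_apply_mul {σ : Perm α} {a : α} (ha : σ a ≠ a) :
    cycleCount σ < cycleCount (swap a (σ a) * σ) := by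
  have hfix : (swap a (σ a) * σ) a = a := by rw [mul_apply, swap_apply_right]
  refine classCount_lt (SameCycle.equivalence _) (SameCycle.equivalence _)
    ((sameCycle_swap_mul_le σ a (σ a)).trans
      (mergeClasses_le (SameCycle.equivalence _) (sameCycle_self_apply σ a)))
    (sameCycle_self_apply σ a) fun h => ha (h.eq_of_left hfix).symm

lemma cycleCount_swap_mul_le {σ : Perm α} {a b : α} (h : ¬ σ.SameCycle a b) :
    cycleCount (swap a b * σ) ≤ cycleCount σ := by
  -- `σ = swap a b * τ` fuses the `τ`-cycles of `a` and `b`, and must do so as it separates them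
  set τ := swap a b * σ
  have hσ : σ.SameCycle ≤ mergeClasses τ.SameCycle a b := by
    simpa only [τ, swap_mul_self_mul] using sameCycle_swap_mul_le τ a b
  have hlt := classCount_lt (SameCycle.equivalence _)
    (equivalence_mergeClasses (SameCycle.equivalence _) a b) hσ
    (Or.inr ⟨Or.inl (SameCycle.refl _ _), Or.inr (SameCycle.refl _ _)⟩) h
  have := classCount_le_classCount_mergeClasses_add_one (SameCycle.equivalence τ) a b
  exact Nat.le_of_lt_succ (this.trans_lt (Nat.add_lt_add_right hlt 1))

end CycleCount

section ReflLen

variable {n : ℕ}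

structure IsReducedWord (l : List (Perm (Fin n))) (w : Perm (Fin n)) : Prop where
  isSwap : ∀ t ∈ l, t.IsSwap
  length_eq : l.length = reflLen w
  prod_eq : l.prod = w

lemma reflLen_prod_le {l : List (Perm (Fin n))} (hl : ∀ t ∈ l, t.IsSwap) :
    reflLen l.prod ≤ l.length :=
  Nat.sInf_le ⟨l, hl, rfl, rfl⟩

lemma exists_isReducedWord (w : Perm (Fin n)) : ∃ l, IsReducedWord l w := by
  obtain ⟨⟨l, hprod, hswap⟩⟩ := truncSwapFactors w
  obtain ⟨l', hswap', hlen, hprod'⟩ : reflLen w ∈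
      {k | ∃ l : List (Perm (Fin n)), (∀ t ∈ l, t.IsSwap) ∧ l.length = k ∧ l.prod = w} :=
    Nat.sInf_mem ⟨l.length, l, hswap, rfl, hprod⟩
  exact ⟨l', hswap', hlen, hprod'⟩

@[simp] lemma reflLen_one : reflLen (1 : Perm (Fin n)) = 0 :=
  Nat.le_zero.1 (reflLen_prod_le (l := []) (by simp))

lemma reflLen_eq_zero_iff {σ : Perm (Fin n)} : reflLen σ = 0 ↔ σ = 1 := by
  refine ⟨fun h => ?_, fun h => h ▸ reflLen_one⟩
  obtain ⟨l, -, hlen, rfl⟩ := exists_isReducedWord σ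
  rw [List.eq_nil_of_length_eq_zero (hlen.trans h), List.prod_nil]

lemma reflLen_mul_le (u v : Perm (Fin n)) : reflLen (u * v) ≤ reflLen u + reflLen v := by
  obtain ⟨l₁, h₁, hlen₁, rfl⟩ := exists_isReducedWord u
  obtain ⟨l₂, h₂, hlen₂, rfl⟩ := exists_isReducedWord v
  rw [← hlen₁, ← hlen₂, ← List.length_append, ← List.prod_append]
  exact reflLen_prod_le fun t ht => (List.mem_append.1 ht).elim (h₁ t) (h₂ t)

lemma reflLen_le_reflLen_add_reflLen_inv_mul (u v : Perm (Fin n)) :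
    reflLen v ≤ reflLen u + reflLen (u⁻¹ * v) := by
  simpa using reflLen_mul_le u (u⁻¹ * v)

lemma reflLen_eq_one_iff {σ : Perm (Fin n)} : reflLen σ = 1 ↔ σ.IsSwap := by
  constructor
  · intro h
    obtain ⟨l, hl, hlen, rfl⟩ := exists_isReducedWord σ
    obtain ⟨t, rfl⟩ := List.length_eq_one_iff.1 (hlen.trans h)
    simpa using hl t (List.mem_singleton_self t)
  · intro h
    have hle : reflLen σ ≤ 1 := by simpa using reflLen_prod_le (l := [σ]) (by simpa using h)
    have := mt reflLen_eq_zero_iff.1 h.isCycle.ne_one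
    omega

lemma reflLen_conj_le (g σ : Perm (Fin n)) : reflLen (g * σ * g⁻¹) ≤ reflLen σ := by
  obtain ⟨l, hl, hlen, rfl⟩ := exists_isReducedWord σ
  rw [← hlen, ← MulAut.conj_apply, map_list_prod, ← List.length_map (MulAut.conj g)]
  refine reflLen_prod_le fun t ht => ?_
  obtain ⟨s, hs, rfl⟩ := List.mem_map.1 ht
  obtain ⟨a, b, hab, rfl⟩ := hl s hs
  exact ⟨g a, g b, g.injective.ne hab, by rw [MulAut.conj_apply, swap_apply_apply]⟩

lemma reflLen_conj (g σ : Perm (Fin n)) : reflLen (g * σ * g⁻¹) = reflLen σ :=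
  le_antisymm (reflLen_conj_le g σ)
    (by simpa [mul_assoc] using reflLen_conj_le g⁻¹ (g * σ * g⁻¹))

lemma neg_one_pow_reflLen (σ : Perm (Fin n)) : (-1) ^ reflLen σ = sign σ := by
  obtain ⟨l, hl, hlen, rfl⟩ := exists_isReducedWord σ
  rw [← hlen, sign_prod_list_swap hl]

lemma reflLen_swap_mul_ne {a b : Fin n} (hab : a ≠ b) (σ : Perm (Fin n)) :
    reflLen (swap a b * σ) ≠ reflLen σ := by
  intro h
  have := neg_one_pow_reflLen (swap a b * σ)
  rw [Perm.sign_mul, sign_swap hab, neg_one_mul, h, neg_one_pow_reflLen] at this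
  exact units_ne_neg_self _ this

end ReflLen

section Transpositions

variable {n : ℕ} {σ : Perm (Fin n)} {a b : Fin n}

lemma reflLen_swap (hab : a ≠ b) : reflLen (swap a b) = 1 :=
  reflLen_eq_one_iff.2 ⟨a, b, hab, rfl⟩

lemma reflLen_le_reflLen_swap_mul_add_one (a b : Fin n) (σ : Perm (Fin n)) :
    reflLen σ ≤ reflLen (swap a b * σ) + 1 := by
  rcases eq_or_ne a b with rfl | hab
  · rw [swap_self, ← Perm.one_def, one_mul]
    exact Nat.le_succ _
  simpa [swap_mul_self_mul, reflLen_swap hab, add_comm] using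
    reflLen_mul_le (swap a b) (swap a b * σ)

lemma le_length_add_cycleCount_prod {l : List (Perm (Fin n))} (hl : ∀ t ∈ l, t.IsSwap) :
    n ≤ l.length + cycleCount l.prod := by
  induction l with
  | nil => simp [cycleCount_one]
  | cons t l ih =>
    obtain ⟨a, b, -, rfl⟩ := hl t List.mem_cons_self
    have := cycleCount_le_cycleCount_swap_mul_add_one l.prod a b
    have := ih fun s hs => hl s (List.mem_cons_of_mem _ hs)
    simp only [List.length_cons, List.prod_cons]
    omega

lemma reflLen_add_cycleCount_le (σ : Perm (Fin n)) : reflLen σ + cycleCount σ ≤ n := by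
  induction h : n - cycleCount σ using Nat.strong_induction_on generalizing σ with
  | _ k ih =>
  have hσ_le : cycleCount σ ≤ n := by simpa using cycleCount_le σ
  by_cases hσ : σ = 1
  · simpa [hσ] using hσ_le
  obtain ⟨a, ha⟩ : ∃ a, σ a ≠ a := not_forall.1 fun h => hσ (Equiv.ext h)
  have hlt := cycleCount_lt_cycleCount_swap_apply_mul ha
  have hle : cycleCount (swap a (σ a) * σ) ≤ n := by
    simpa using cycleCount_le (swap a (σ a) * σ)
  have := ih _ (by omega) (swap a (σ a) * σ) rfl
  have := reflLen_le_reflLen_swap_mul_add_one a (σ a) σ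
  omega

lemma reflLen_add_cycleCount (σ : Perm (Fin n)) : reflLen σ + cycleCount σ = n := by
  refine le_antisymm (reflLen_add_cycleCount_le σ) ?_
  obtain ⟨l, hl, hlen, rfl⟩ := exists_isReducedWord σ
  simpa [hlen] using le_length_add_cycleCount_prod hl

lemma reflLen_swap_mul_add_one (hab : a ≠ b) (h : σ.SameCycle a b) :
    reflLen (swap a b * σ) + 1 = reflLen σ := by
  have := reflLen_add_cycleCount σ
  have := reflLen_add_cycleCount (swap a b * σ)
  have := cycleCount_le_cycleCount_swap_mul h
  have := reflLen_swap_mul_ne hab σ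
  have := reflLen_le_reflLen_swap_mul_add_one a b σ
  omega

lemma sameCycle_of_reflLen_swap_mul_le (hab : a ≠ b) (h : reflLen (swap a b * σ) ≤ reflLen σ) :
    σ.SameCycle a b := by
  by_contra hn
  have := reflLen_add_cycleCount σ
  have := reflLen_add_cycleCount (swap a b * σ)
  have := cycleCount_swap_mul_le hn
  have := reflLen_swap_mul_ne hab σ
  omega

end Transpositions

section AbsoluteOrder

variable {n : ℕ} {u v : Perm (Fin n)}

lemma absLe.between_of_mul_eq (h : absLe u v) {p q : Perm (Fin n)} (hpq : p * q = u⁻¹ * v)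
    (hlen : reflLen p + reflLen q ≤ reflLen (u⁻¹ * v)) :
    absLe u (u * p) ∧ absLe (u * p) v := by
  have := reflLen_mul_le u p
  have : reflLen v ≤ reflLen (u * p) + reflLen q := by
    simpa [mul_assoc, hpq] using reflLen_mul_le (u * p) q
  have hq : (u * p)⁻¹ * v = q := by rw [mul_inv_rev, mul_assoc, ← hpq, inv_mul_cancel_left]
  unfold absLe at h ⊢
  rw [inv_mul_cancel_left, hq]
  omega

lemma absCovers_iff : absCovers u v ↔ absLe u v ∧ reflLen (u⁻¹ * v) = 1 := by
  constructor
  · rintro ⟨⟨h, hne⟩, hmin⟩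
    refine ⟨h, ?_⟩
    have hpos : reflLen (u⁻¹ * v) ≠ 0 :=
      fun h0 => hne (inv_mul_eq_one.1 (reflLen_eq_zero_iff.1 h0))
    obtain ⟨_ | ⟨t, l⟩, hl, hlen, hprod⟩ := exists_isReducedWord (u⁻¹ * v)
    · exact absurd hlen.symm hpos
    by_contra h1
    have ht : reflLen t = 1 := reflLen_eq_one_iff.2 (hl t List.mem_cons_self)
    have hl' := reflLen_prod_le fun s hs => hl s (List.mem_cons_of_mem t hs)
    simp only [List.length_cons, List.prod_cons] at hlen hprod
    obtain ⟨hut, htv⟩ := h.between_of_mul_eq hprod (by omega)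
    refine hmin (u * t) ⟨⟨hut, fun hu => ?_⟩, htv, fun htv' => ?_⟩
    · simp [show t = 1 by simpa using hu] at ht
    · rw [← htv', inv_mul_cancel_left] at h1
      exact h1 ht
  · rintro ⟨h, h1⟩
    refine ⟨⟨h, fun huv => by simp [huv] at h1⟩, fun z ⟨⟨hz, hne⟩, hzv, hne'⟩ => ?_⟩
    have := mt reflLen_eq_zero_iff.1 (mt inv_mul_eq_one.1 hne)
    have := mt reflLen_eq_zero_iff.1 (mt inv_mul_eq_one.1 hne')
    unfold absLe at h hz hzv
    omega

lemma absLe.inv_mul {x y z : Perm (Fin n)} (hxy : absLe x y) (hyz : absLe y z) :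
    absLe (x⁻¹ * y) z := by
  have hconj : reflLen ((x⁻¹ * y)⁻¹ * y) = reflLen x := by
    simpa [mul_assoc] using reflLen_conj y⁻¹ x
  have : reflLen ((x⁻¹ * y)⁻¹ * z) ≤ reflLen ((x⁻¹ * y)⁻¹ * y) + reflLen (y⁻¹ * z) := by
    simpa [mul_assoc] using reflLen_mul_le ((x⁻¹ * y)⁻¹ * y) (y⁻¹ * z)
  have := reflLen_le_reflLen_add_reflLen_inv_mul (x⁻¹ * y) z
  unfold absLe at hxy hyz ⊢
  omega

end AbsoluteOrder

section IncreasingCycles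

variable {n : ℕ}

/-- No point of the cycle of `x` lies strictly between `x` and `w x` in the cyclic order of
`Fin n`: every cycle of `w` is `(c₁ c₂ … c_k)` with `c₁ < c₂ < ⋯ < c_k`. -/
def HasIncreasingCycles (w : Perm (Fin n)) : Prop :=
  ∀ x y, w.SameCycle x y → ¬ (x < y ∧ y < w x) ∧ ¬ (y < w x ∧ w x < x) ∧ ¬ (w x < x ∧ x < y)

lemma hasIncreasingCycles_finRotate (n : ℕ) : HasIncreasingCycles (finRotate n) := by
  rcases n with _ | m
  · exact fun x => x.elim0
  intro x y _
  rw [finRotate_apply]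
  simp only [Fin.lt_def, Fin.val_add_one]
  split_ifs with h
  · subst h; simp only [Fin.val_last]; omega
  · omega

namespace HasIncreasingCycles

variable {w : Perm (Fin n)} {a b : Fin n}

lemma swap_mul (hw : HasIncreasingCycles w) (hab : a < b) (h : w.SameCycle a b) :
    HasIncreasingCycles (swap a b * w) := by
  have ha : w a ≠ a := fun ha => hab.ne (h.eq_of_left ha)
  have hb : w b ≠ b := fun hb => hab.ne (h.symm.eq_of_left hb).symm
  have hf : ∀ x, (swap a b * w) x = if w x = a then b else if w x = b then a else w x :=
    fun x => by rw [mul_apply, swap_apply_def]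
  -- on the cycle through `a` and `b`, the arc `[a, b)` is a union of cycles of `swap a b * w`
  let R : Fin n → Fin n → Prop := fun x y =>
    w.SameCycle x y ∧ (w.SameCycle x a → (a ≤ x ∧ x < b ↔ a ≤ y ∧ y < b))
  have hR : Equivalence R :=
    ⟨fun x => ⟨SameCycle.refl _ _, fun _ => Iff.rfl⟩,
     fun ⟨hxy, hS⟩ => ⟨hxy.symm, fun hy => (hS (hxy.trans hy)).symm⟩,
     fun ⟨hxy, hS⟩ ⟨hyz, hS'⟩ =>
      ⟨hxy.trans hyz, fun hx => (hS hx).trans (hS' (hxy.symm.trans hx))⟩⟩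
  -- `omega` sees `w x`, `w a`, `w b` as unrelated atoms
  have hw_congr : ∀ x, (x = a → w x = w a) ∧ (x = b → w x = w b) :=
    fun _ => ⟨congrArg w, congrArg w⟩
  have hstep : ∀ x, R x ((swap a b * w) x) := by
    intro x
    have hx := sameCycle_self_apply w x
    refine ⟨?_, fun hxa => ?_⟩
    · rw [hf]
      split_ifs with h1 h2
      exacts [(h1 ▸ hx).trans h, (h2 ▸ hx).trans h.symm, hx]
    · have := hw x a hxa
      have := hw x b (hxa.trans h)
      have := hw_congr x
      rw [hf]
      split_ifs <;> omega
  intro x y hxy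
  obtain ⟨hxy, hS⟩ := hxy.rel hR hstep
  have := hw_congr x
  have hwxy := hw x y hxy
  rw [hf]
  split_ifs with h1 h2
  · have hxa : w.SameCycle x a := h1 ▸ sameCycle_self_apply w x
    have := hw x b (hxa.trans h)
    have := hS hxa
    omega
  · have hxa : w.SameCycle x a := (h2 ▸ sameCycle_self_apply w x).trans h.symm
    have := hw x a hxa
    have := hS hxa
    omega
  · exact hwxy

lemma of_absLe {v : Perm (Fin n)} (hv : HasIncreasingCycles v) (h : absLe w v) :
    HasIncreasingCycles w := by
  induction hk : reflLen (w⁻¹ * v) using Nat.strong_induction_on generalizing w with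
  | _ k ih =>
  obtain ⟨_ | ⟨t, l⟩, hl, hlen, hprod⟩ := exists_isReducedWord (w⁻¹ * v)
  · rwa [inv_mul_eq_one.1 hprod.symm]
  obtain ⟨a, b, hab, rfl⟩ := hl _ List.mem_cons_self
  have hl' := reflLen_prod_le fun s hs => hl s (List.mem_cons_of_mem _ hs)
  simp only [List.length_cons, List.prod_cons] at hlen hprod
  obtain ⟨hw, hwv⟩ := h.between_of_mul_eq hprod (by rw [reflLen_swap hab]; omega)
  have hcycles : HasIncreasingCycles (w * swap a b) := by
    refine ih _ ?_ hwv rfl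
    rw [mul_inv_rev, mul_assoc, ← hprod, swap_inv, swap_mul_self_mul]
    omega
  -- going down from `w * swap a b` to `w` splits one of its (increasing) cycles
  have hw_eq : w = swap ((w * swap a b) a) ((w * swap a b) b) * (w * swap a b) := by
    rw [swap_apply_apply, inv_mul_cancel_right, mul_swap_mul_self]
  have hsc := sameCycle_of_reflLen_swap_mul_le ((w * swap a b).injective.ne hab) <| by
    rw [← hw_eq]; unfold absLe at hw; omega
  rw [hw_eq]
  rcases lt_or_gt_of_ne ((w * swap a b).injective.ne hab) with hlt | hgt
  · exact hcycles.swap_mul hlt hsc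
  · rw [swap_comm]
    exact hcycles.swap_mul hgt hsc.symm

end HasIncreasingCycles

end IncreasingCycles

section ReducedWords

variable {n : ℕ} {w : Perm (Fin n)} {l : List (Perm (Fin n))} {a b m : Fin n}

lemma swap_eq_swap_iff_of_lt {i j p q : Fin n} (hij : i < j) (hpq : p < q) :
    swap i j = swap p q ↔ i = p ∧ j = q := by
  refine ⟨fun h => ?_, by rintro ⟨rfl, rfl⟩; rfl⟩
  have hi := congr($h i)
  have hp := congr($h p)
  simp only [swap_apply_def] at hi hp
  split_ifs at hi hp <;> omega

lemma transLt_swap_swap_iff {i j p q : Fin n} (hij : i < j) (hpq : p < q) :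
    transLt (swap i j) (swap p q) ↔ i < p ∨ i = p ∧ j < q := by
  refine ⟨?_, fun h => ⟨i, j, p, q, hij, hpq, rfl, rfl, h⟩⟩
  rintro ⟨i', j', p', q', hij', hpq', h, h', hlt⟩
  obtain ⟨rfl, rfl⟩ := (swap_eq_swap_iff_of_lt hij hij').1 h
  obtain ⟨rfl, rfl⟩ := (swap_eq_swap_iff_of_lt hpq hpq').1 h'
  exact hlt

lemma support_swap_mul_subset (ha : a ∈ w.support) (hb : b ∈ w.support) :
    (swap a b * w).support ⊆ w.support := by
  intro x hx
  by_contra hwx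
  rw [mem_support, not_not] at hwx
  rw [mem_support, mul_apply, hwx] at hx
  exact hx (swap_apply_of_ne_of_ne (by rintro rfl; exact mem_support.1 ha hwx)
    (by rintro rfl; exact mem_support.1 hb hwx))

namespace IsReducedWord

lemma of_swap_cons (hl : IsReducedWord (swap a b :: l) w) : IsReducedWord l (swap a b * w) := by
  obtain ⟨hswap, hlen, hprod⟩ := hl
  have htail : ∀ t ∈ l, t.IsSwap := fun t ht => hswap t (List.mem_cons_of_mem _ ht)
  have hprod' : l.prod = swap a b * w := by rw [← hprod, List.prod_cons, swap_mul_self_mul]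
  have := reflLen_prod_le htail
  have := reflLen_le_reflLen_swap_mul_add_one a b w
  simp only [List.length_cons] at hlen
  exact ⟨htail, by rw [← hprod'] at *; omega, hprod'⟩

lemma swap_cons (hab : a ≠ b) (hl : IsReducedWord l (swap a b * w))
    (hlen : reflLen (swap a b * w) + 1 = reflLen w) : IsReducedWord (swap a b :: l) w := by
  refine ⟨fun t ht => ?_, by simp [hl.length_eq, hlen], by rw [List.prod_cons, hl.prod_eq,
    swap_mul_self_mul]⟩
  rcases List.mem_cons.1 ht with rfl | ht
  exacts [⟨a, b, hab, rfl⟩, hl.isSwap t ht]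

lemma sameCycle (hl : IsReducedWord l w) (hab : a ≠ b) (hmem : swap a b ∈ l) :
    w.SameCycle a b := by
  obtain ⟨l₁, l₂, rfl⟩ := List.append_of_mem hmem
  obtain ⟨hswap, hlen, hprod⟩ := hl
  refine sameCycle_of_reflLen_swap_mul_le hab ?_
  have hconj : swap a b * w = (swap a b * l₁.prod * (swap a b)⁻¹) * l₂.prod := by
    simp [← hprod, mul_assoc]
  have := reflLen_prod_le fun t ht => hswap t (List.mem_append_left _ ht)
  have := reflLen_prod_le fun t ht =>
    hswap t (List.mem_append_right _ (List.mem_cons_of_mem _ ht))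
  have := reflLen_mul_le (swap a b * l₁.prod * (swap a b)⁻¹) l₂.prod
  rw [reflLen_conj, ← hconj] at this
  simp only [List.length_append, List.length_cons] at hlen
  omega

lemma exists_lt (hl : IsReducedWord l w) {t : Perm (Fin n)} (ht : t ∈ l) :
    ∃ i j, i < j ∧ t = swap i j ∧ w.SameCycle i j := by
  obtain ⟨i, j, hij, rfl⟩ := hl.isSwap t ht
  rcases lt_or_gt_of_ne hij with h | h
  · exact ⟨i, j, h, rfl, hl.sameCycle hij ht⟩
  · exact ⟨j, i, h, swap_comm i j, hl.sameCycle hij.symm (swap_comm i j ▸ ht)⟩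

end IsReducedWord

end ReducedWords

section IncreasingWords

variable {n : ℕ} {w : Perm (Fin n)} {l : List (Perm (Fin n))} {m : Fin n}

lemma lt_apply_of_isLeast_support (hm : IsLeast (w.support : Set (Fin n)) m) : m < w m :=
  lt_of_le_of_ne (hm.2 (apply_mem_support.2 hm.1)) (mem_support.1 hm.1).symm

lemma IsReducedWord.exists_eq_swap_cons (hl : IsReducedWord l w) (hinc : l.Pairwise transLt)
    (hm : IsLeast (w.support : Set (Fin n)) m) :
    ∃ j l', l = swap m j :: l' ∧ m < j ∧ w.SameCycle m j := by
  have hle : ∀ {i j}, i < j → w.SameCycle i j → m ≤ i := fun hij hsc =>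
    hm.2 (mem_support.2 fun h => hij.ne (hsc.eq_of_left h))
  obtain ⟨u, hu, hum⟩ : ∃ u ∈ l, u m ≠ m := by
    by_contra! hfix
    exact mem_support.1 hm.1 <| hl.prod_eq ▸ List.prod_induction (fun s : Perm (Fin n) => s m = m)
      (fun s t hs ht => by rw [mul_apply, ht, hs]) rfl hfix
  obtain ⟨i, j, hij, rfl, hsc⟩ := hl.exists_lt hu
  have him : i = m := by
    have := hle hij hsc
    by_contra hne
    exact hum (swap_apply_of_ne_of_ne (Ne.symm hne) (by omega))
  obtain ⟨t, l', rfl⟩ := List.exists_cons_of_ne_nil (List.ne_nil_of_mem hu)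
  obtain ⟨i₁, j₁, hij₁, rfl, hsc₁⟩ := hl.exists_lt List.mem_cons_self
  have hi₁ : i₁ = m := by
    have := hle hij₁ hsc₁
    rcases List.mem_cons.1 hu with h | h
    · have := ((swap_eq_swap_iff_of_lt hij hij₁).1 h).1
      omega
    · have := (transLt_swap_swap_iff hij₁ hij).1 (List.rel_of_pairwise_cons hinc h)
      omega
  subst hi₁
  exact ⟨j₁, l', rfl, hij₁, hsc₁⟩

namespace HasIncreasingCycles

lemma exists_eq_swap_apply_cons (hw : HasIncreasingCycles w) (hl : IsReducedWord l w)
    (hinc : l.Pairwise transLt) (hm : IsLeast (w.support : Set (Fin n)) m) :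
    ∃ l', l = swap m (w m) :: l' := by
  induction l generalizing w with
  | nil =>
    obtain ⟨j, l', h, -⟩ := hl.exists_eq_swap_cons hinc hm
    exact absurd h.symm (List.cons_ne_nil _ _)
  | cons t l ih =>
    obtain ⟨j, l', h, hmj, hsc⟩ := hl.exists_eq_swap_cons hinc hm
    obtain ⟨rfl, rfl⟩ := List.cons_eq_cons.1 h
    rcases eq_or_ne j (w m) with rfl | hjm
    · exact ⟨l, rfl⟩
    exfalso
    have hvm : (swap m j * w) m = w m :=
      swap_apply_of_ne_of_ne (mem_support.1 hm.1) hjm.symm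
    have hv : IsLeast ((swap m j * w).support : Set (Fin n)) m :=
      ⟨mem_support.2 (hvm ▸ mem_support.1 hm.1),
        fun x hx => hm.2 (support_swap_mul_subset hm.1 (hsc.mem_support_iff.1 hm.1) hx)⟩
    obtain ⟨l'', rfl⟩ := ih (hw.swap_mul hmj hsc) hl.of_swap_cons hinc.of_cons hv
    rw [hvm] at hinc
    have := (transLt_swap_swap_iff hmj (lt_apply_of_isLeast_support hm)).1
      (List.rel_of_pairwise_cons hinc List.mem_cons_self)
    exact (hw m j hsc).1 ⟨hmj, by omega⟩

theorem existsUnique_isReducedWord_pairwise (hw : HasIncreasingCycles w) :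
    ∃! l, IsReducedWord l w ∧ l.Pairwise transLt := by
  induction hk : reflLen w using Nat.strong_induction_on generalizing w with
  | _ k ih =>
  by_cases h1 : w = 1
  · subst h1
    refine ⟨[], ⟨⟨by simp, by simp, rfl⟩, List.Pairwise.nil⟩, fun l ⟨hl, _⟩ => ?_⟩
    exact List.eq_nil_of_length_eq_zero (hl.length_eq.trans reflLen_one)
  have hm := w.support.isLeast_min' (Finset.nonempty_iff_ne_empty.2 (mt support_eq_empty_iff.1 h1))
  set m := w.support.min' _
  have hmw := lt_apply_of_isLeast_support hm
  have hsc := sameCycle_self_apply w m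
  have hlen := reflLen_swap_mul_add_one hmw.ne hsc
  obtain ⟨l', ⟨hl', hinc'⟩, huniq⟩ := ih _ (by omega) (hw.swap_mul hmw hsc) rfl
  refine ⟨swap m (w m) :: l',
    ⟨hl'.swap_cons hmw.ne hlen, List.pairwise_cons.2 ⟨fun t ht => ?_, hinc'⟩⟩, ?_⟩
  · obtain ⟨i, j, hij, rfl, hsc'⟩ := hl'.exists_lt ht
    obtain ⟨hi, him⟩ := mem_support_swap_mul_imp_mem_support_ne
      (mem_support.2 fun h => hij.ne (hsc'.eq_of_left h))
    exact (transLt_swap_swap_iff hmw hij).2 (Or.inl (lt_of_le_of_ne (hm.2 hi) him.symm))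
  · rintro l₂ ⟨hl₂, hinc₂⟩
    obtain ⟨l₂', rfl⟩ := hw.exists_eq_swap_apply_cons hl₂ hinc₂ hm
    rw [huniq l₂' ⟨hl₂.of_swap_cons, hinc₂.of_cons⟩]

end HasIncreasingCycles

end IncreasingWords

section Chains

variable {G : Type*} [Group G] {k : ℕ}

def chainLabels (c : Fin (k + 1) → G) : Fin k → G :=
  fun i => (c i.castSucc)⁻¹ * c i.succ

lemma eq_of_chainLabels_eq {c c' : Fin (k + 1) → G} (h0 : c 0 = c' 0)
    (h : chainLabels c = chainLabels c') : c = c' := by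
  rw [← Fin.partialProd_left_inv c, ← Fin.partialProd_left_inv c', h0]
  exact congrArg (fun f => c' 0 • Fin.partialProd f) h

lemma prod_ofFn_chainLabels (c : Fin (k + 1) → G) :
    (List.ofFn (chainLabels c)).prod = (c 0)⁻¹ * c (Fin.last k) := by
  have := congrFun (Fin.partialProd_left_inv c) (Fin.last k)
  rw [eq_inv_mul_iff_mul_eq, ← this]
  simp only [Pi.smul_apply, smul_eq_mul, Fin.partialProd, Fin.val_last]
  rw [List.take_of_length_le (by simp)]
  rfl

lemma inv_mul_prod_take_succ (x : G) {l : List G} {i : ℕ}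
    (hi : i < l.length) : (x * (l.take i).prod)⁻¹ * (x * (l.take (i + 1)).prod) = l[i] := by
  rw [List.prod_take_succ _ _ hi, mul_inv_rev, mul_assoc, inv_mul_cancel_left,
    ← mul_assoc, inv_mul_cancel, one_mul]

variable {n : ℕ} {x y : Perm (Fin n)} {l : List (Perm (Fin n))}

lemma isReducedWord_ofFn_chainLabels {c : Fin (reflLen (x⁻¹ * y) + 1) → Perm (Fin n)}
    (h0 : c 0 = x) (hlast : c (Fin.last _) = y)
    (hc : ∀ i : Fin (reflLen (x⁻¹ * y)), absCovers (c i.castSucc) (c i.succ)) :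
    IsReducedWord (List.ofFn (chainLabels c)) (x⁻¹ * y) := by
  refine ⟨fun t ht => ?_, List.length_ofFn, by rw [prod_ofFn_chainLabels, h0, hlast]⟩
  obtain ⟨i, rfl⟩ := List.mem_ofFn.1 ht
  exact reflLen_eq_one_iff.1 (absCovers_iff.1 (hc i)).2

lemma reflLen_mul_prod_take (hxy : absLe x y) (hl : IsReducedWord l (x⁻¹ * y)) {i : ℕ}
    (hi : i ≤ l.length) : reflLen (x * (l.take i).prod) = reflLen x + i := by
  have htake := reflLen_prod_le (l := l.take i) fun t ht => hl.isSwap t (List.mem_of_mem_take ht)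
  have hdrop := reflLen_prod_le (l := l.drop i) fun t ht => hl.isSwap t (List.mem_of_mem_drop ht)
  have := reflLen_mul_le x (l.take i).prod
  have := reflLen_mul_le (x * (l.take i).prod) (l.drop i).prod
  rw [mul_assoc, ← List.prod_append, List.take_append_drop, hl.prod_eq, mul_inv_cancel_left]
    at this
  simp only [List.length_take, List.length_drop] at htake hdrop
  have := hl.length_eq
  unfold absLe at hxy
  omega

lemma absCovers_mul_prod_take (hxy : absLe x y) (hl : IsReducedWord l (x⁻¹ * y)) {i : ℕ}
    (hi : i < l.length) : absCovers (x * (l.take i).prod) (x * (l.take (i + 1)).prod) := by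
  have h1 : reflLen l[i] = 1 := reflLen_eq_one_iff.2 (hl.isSwap _ (List.getElem_mem hi))
  refine absCovers_iff.2 ⟨?_, inv_mul_prod_take_succ x hi ▸ h1⟩
  unfold absLe
  rw [inv_mul_prod_take_succ x hi, h1, reflLen_mul_prod_take hxy hl hi.le,
    reflLen_mul_prod_take hxy hl hi]
  rfl

end Chains

theorem unique_increasing_maximal_chain_general (n : ℕ) (x y : Perm (Fin n))
    (hxy : absLe x y) (hyw : absLe y (finRotate n)) :
    ∃! c : Fin (reflLen (x⁻¹ * y) + 1) → Perm (Fin n),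
      c 0 = x ∧ c (Fin.last _) = y ∧
      (∀ i : Fin (reflLen (x⁻¹ * y)), absCovers (c i.castSucc) (c i.succ)) ∧
      (∀ i j : Fin (reflLen (x⁻¹ * y)), i < j →
        transLt ((c i.castSucc)⁻¹ * c i.succ) ((c j.castSucc)⁻¹ * c j.succ)) := by
  have hw := (hasIncreasingCycles_finRotate n).of_absLe (hxy.inv_mul hyw)
  obtain ⟨l, ⟨hl, hinc⟩, huniq⟩ := hw.existsUnique_isReducedWord_pairwise
  have hlen := hl.length_eq
  set c : Fin (reflLen (x⁻¹ * y) + 1) → Perm (Fin n) := fun i => x * (l.take i).prod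
  have hc : List.ofFn (chainLabels c) = l := List.ext_getElem (by simp [hlen])
    fun i _ hi => by rw [List.getElem_ofFn]; exact inv_mul_prod_take_succ x hi
  refine ⟨c, ⟨by simp [c], by simp [c, ← hlen, hl.prod_eq],
    fun i => absCovers_mul_prod_take (i := i) hxy hl (by omega),
    fun i j hij => List.pairwise_ofFn.1 (hc ▸ hinc) hij⟩, ?_⟩
  rintro c' ⟨hc0, hclast, hcov, hcinc⟩
  have hc' := huniq _ ⟨isReducedWord_ofFn_chainLabels hc0 hclast hcov, List.pairwise_ofFn.2 hcinc⟩
  exact eq_of_chainLabels_eq (by simp [hc0, c]) (List.ofFn_injective (hc'.trans hc.symm))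

/-- Every interval `[x, y]` of `NC(S_n, (1 2 ... n))` contains a unique maximal chain whose
sequence of edge labels `(cᵢ)⁻¹cᵢ₊₁` is strictly increasing in the lexicographic order on
transpositions. -/
theorem unique_increasing_maximal_chain (n : ℕ) (hn : 2 ≤ n) (x y : Perm (Fin n))
    (hxy : absLe x y) (hyw : absLe y (finRotate n)) :
    ∃! c : Fin (reflLen (x⁻¹ * y) + 1) → Perm (Fin n),
      c 0 = x ∧ c (Fin.last _) = y ∧
      (∀ i : Fin (reflLen (x⁻¹ * y)), absCovers (c i.castSucc) (c i.succ)) ∧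
      (∀ i j : Fin (reflLen (x⁻¹ * y)), i < j →
        transLt ((c i.castSucc)⁻¹ * c i.succ) ((c j.castSucc)⁻¹ * c j.succ)) :=
  unique_increasing_maximal_chain_general n x y hxy hyw
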